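/- Let T and T' be maximally reduced MUL-trees with I(T) = I(T'), and let φ be a bijection between their internal edges such that corresponding edges have equal M-sets on corresponding sides. If (u,v) and (v,x) are adjacent internal edges of T sharing the vertex v, and (p,q) = φ(u,v) and (r,s) = φ(v,x) are oriented so that M_u^{uv} = M_p^{pq} and M_v^{vx} = M_r^{rs}, then q = r; that is, the image edges are adjacent in T' and share a common endpoint corresponding to v. -/

import Mathlib

open SimpleGraph

variable {V V' L L' : Type}

/-- Degree of a vertex, via `Set.ncard` of the neighbor set (no instances needed). -/
noncomputable def deg (G : SimpleGraph V) (v : V) : ℕ := (G.neighborSet v).ncard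

/-- A leaf is a vertex of degree one. -/
def IsLeaf (G : SimpleGraph V) (v : V) : Prop := deg G v = 1

/-- The vertex set of the subtree `T_u^{uv}`: vertices reachable from `u`
after deleting the edge `(u,v)`. -/
def side (G : SimpleGraph V) (u v : V) : Set V :=
  {w | (G.deleteEdges {s(u, v)}).Reachable w u}

/-- Labels appearing on leaves of the `u`-side of the edge `(u,v)`. -/
def sideLabels (G : SimpleGraph V) (ψ : V → L) (u v : V) : Set L :=
  {m | ∃ w, IsLeaf G w ∧ w ∈ side G u v ∧ ψ w = m}

/-- `M_u^{uv}`: labels appearing on leaves of `T_u^{uv}` but not of `T_v^{uv}`. -/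
def Mside (G : SimpleGraph V) (ψ : V → L) (u v : V) : Set L :=
  sideLabels G ψ u v \ sideLabels G ψ v u

/-- `C^{uv}`: labels appearing on leaves of both sides of the edge `(u,v)`. -/
def Cside (G : SimpleGraph V) (ψ : V → L) (u v : V) : Set L :=
  sideLabels G ψ u v ∩ sideLabels G ψ v u

/-- A quartet `ab|cd`: an unordered pair of unordered pairs of labels. -/
abbrev Quartet (L : Type) := Sym2 (Sym2 L)

/-- The edge `(u,v)` resolves the quartet `q = ab|cd` when `{a,b} ⊆ M_u^{uv}` and
`{c,d} ⊆ M_v^{uv}` (with `a,b,c,d` four distinct labels). -/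
def Resolves (G : SimpleGraph V) (ψ : V → L) (u v : V) (q : Quartet L) : Prop :=
  G.Adj u v ∧ ∃ a b c d : L, a ≠ b ∧ c ≠ d ∧
    a ∈ Mside G ψ u v ∧ b ∈ Mside G ψ u v ∧
    c ∈ Mside G ψ v u ∧ d ∈ Mside G ψ v u ∧
    q = s(s(a, b), s(c, d))

/-- `Δ(u,v)`: the set of quartets resolved by the edge `(u,v)`. -/
def Δ (G : SimpleGraph V) (ψ : V → L) (u v : V) : Set (Quartet L) :=
  {q | Resolves G ψ u v q}

/-- The information content `I(T)`: all quartets resolved by some edge. -/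
def infoContent (G : SimpleGraph V) (ψ : V → L) : Set (Quartet L) :=
  {q | ∃ u v, Resolves G ψ u v q}

/-- The label set `M`: labels carried by the leaves. -/
def labelSet (G : SimpleGraph V) (ψ : V → L) : Set L :=
  {m | ∃ v, IsLeaf G v ∧ ψ v = m}

/-- Singly labeled: the labeling map is injective on leaves. -/
def SinglyLabeled (G : SimpleGraph V) (ψ : V → L) : Prop :=
  ∀ v w, IsLeaf G v → IsLeaf G w → ψ v = ψ w → v = w

/-- A MUL-tree: a finite unrooted tree (encoded as the nontrivial connected component
of `G`; vertices outside `G.support` are unused isolated vertices) together with a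
labeling `ψ` of its leaves, such that every internal (non-leaf) node has degree ≥ 3.
The label set `M` is `labelSet G ψ`, onto which `ψ` (restricted to leaves) is
automatically surjective. -/
structure MulTree (V L : Type) : Type where
  G : SimpleGraph V
  ψ : V → L
  fin : Finite V
  acyclic : G.IsAcyclic
  conn : ∀ u ∈ G.support, ∀ v ∈ G.support, G.Reachable u v
  internal3 : ∀ v ∈ G.support, ¬ IsLeaf G v → 3 ≤ deg G v

/-- `y` lies on the (unique) path between `a` and `b`: `a,b` are connected and
every walk from `a` to `b` passes through `y`. -/
def OnPath (G : SimpleGraph V) (y a b : V) : Prop :=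
  G.Reachable a b ∧ ∀ p : G.Walk a b, y ∈ p.support

/-- The edges `(u,v)` and `(w,x)` lie, in this order, on the path
`P_{u,x} = (u, v, …, w, x)` (possibly `v = w`). -/
def PathConfig (G : SimpleGraph V) (u v w x : V) : Prop :=
  G.Adj u v ∧ G.Adj w x ∧ OnPath G v u x ∧ OnPath G w v x

/-- An internal edge: both endpoints are internal (non-leaf) nodes. -/
def InternalEdge (G : SimpleGraph V) (a b : V) : Prop :=
  G.Adj a b ∧ ¬ IsLeaf G a ∧ ¬ IsLeaf G b

/-- Contracting the edge `(a,b)`: identify `b` with `a` (the vertex `b` becomes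
an unused isolated vertex). -/
def contractEdge (G : SimpleGraph V) (a b : V) : SimpleGraph V where
  Adj x y := x ≠ y ∧ x ≠ b ∧ y ≠ b ∧
    (G.Adj x y ∨ (x = a ∧ G.Adj b y) ∨ (y = a ∧ G.Adj x b))
  symm := by
    constructor
    rintro x y ⟨h1, h2, h3, h4 | ⟨hx, hy⟩ | ⟨hy, hx⟩⟩
    · exact ⟨h1.symm, h3, h2, Or.inl h4.symm⟩
    · exact ⟨h1.symm, h3, h2, Or.inr (Or.inr ⟨hx, hy.symm⟩)⟩
    · exact ⟨h1.symm, h3, h2, Or.inr (Or.inl ⟨hy, hx.symm⟩)⟩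
  loopless := ⟨fun x h => h.1 rfl⟩

/-- `PruneSpec G v₀ G'` : `G'` is the result of pruning the leaf `v₀` from `G`:
delete `v₀` (i.e. its unique edge); if as a result the neighbor `u` of `v₀`
becomes a degree-two node, additionally delete `u` and connect its former two
other neighbors by an edge. Deleted vertices become unused isolated vertices. -/
def PruneSpec (G : SimpleGraph V) (v₀ : V) (G' : SimpleGraph V) : Prop :=
  ∃ u, G.neighborSet v₀ = {u} ∧
    ((deg G u ≠ 3 ∧ G' = G.deleteEdges {s(u, v₀)}) ∨
     (deg G u = 3 ∧ ∃ p q, p ≠ q ∧ p ≠ v₀ ∧ q ≠ v₀ ∧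
        G.neighborSet u = {v₀, p, q} ∧
        G' = G.deleteEdges {s(u, v₀), s(u, p), s(u, q)} ⊔ fromEdgeSet {s(p, q)}))

/-- A leaf is prunable if pruning it leaves the information content unchanged. -/
def Prunable (G : SimpleGraph V) (ψ : V → L) (v₀ : V) : Prop :=
  IsLeaf G v₀ ∧ ∃ G', PruneSpec G v₀ G' ∧ infoContent G' ψ = infoContent G ψ

/-- An internal edge is contractible if contracting it leaves the information
content unchanged. -/
def Contractible (G : SimpleGraph V) (ψ : V → L) (a b : V) : Prop :=
  InternalEdge G a b ∧ infoContent (contractEdge G a b) ψ = infoContent G ψ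

/-- Maximally reduced: no prunable leaf and no contractible internal edge. -/
def MaximallyReduced (G : SimpleGraph V) (ψ : V → L) : Prop :=
  (∀ v, ¬ Prunable G ψ v) ∧ (∀ a b, ¬ Contractible G ψ a b)

/-- One reduction step: prune a prunable leaf or contract a contractible
internal edge. -/
def ReduceStep (ψ : V → L) (G G' : SimpleGraph V) : Prop :=
  (∃ v₀, Prunable G ψ v₀ ∧ PruneSpec G v₀ G') ∨
  (∃ a b, Contractible G ψ a b ∧ G' = contractEdge G a b)

/-- `H` is a maximally reduced form (MRF) of `G`: obtained from `G` by repeatedly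
pruning prunable leaves and contracting contractible internal edges, until
neither operation is possible. -/
def IsMRF (ψ : V → L) (G H : SimpleGraph V) : Prop :=
  Relation.ReflTransGen (ReduceStep ψ) G H ∧ MaximallyReduced H ψ

/-- Label-preserving isomorphism of (leaf-labeled) trees: a graph isomorphism
between the supports mapping leaves to leaves and preserving leaf labels. -/
def LIso (G : SimpleGraph V) (ψ : V → L) (G' : SimpleGraph V') (ψ' : V' → L) : Prop :=
  ∃ f : G.support ≃ G'.support,
    (∀ x y : G.support, G'.Adj (f x).1 (f y).1 ↔ G.Adj x.1 y.1) ∧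
    (∀ x : G.support, IsLeaf G x.1 → IsLeaf G' (f x).1 ∧ ψ' (f x).1 = ψ x.1)

/-- The set of internal edges of `G`, as unordered pairs. -/
def internalEdgeSet (G : SimpleGraph V) : Set (Sym2 V) :=
  {e | ∃ a b, e = s(a, b) ∧ InternalEdge G a b}

/-- The subtree `T_z^{yz}` branches out from the path `P_{u,x}` :
`y` is an interior vertex of the path and `z` is off the path. -/
def BranchesOut (G : SimpleGraph V) (u x y z : V) : Prop :=
  G.Adj y z ∧ OnPath G y u x ∧ y ≠ u ∧ y ≠ x ∧ ¬ OnPath G z u x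

/-- Vertices of the minimal subtree spanning all leaves labeled `ℓ`. -/
def spanVerts (G : SimpleGraph V) (ψ : V → L) (ℓ : L) : Set V :=
  {p | ∃ c d, IsLeaf G c ∧ IsLeaf G d ∧ ψ c = ℓ ∧ ψ d = ℓ ∧ OnPath G p c d}

/-- Degree of `y` within the subtree induced on the vertex set `S`. -/
noncomputable def degIn (G : SimpleGraph V) (S : Set V) (y : V) : ℕ :=
  (G.neighborSet y ∩ S).ncard

/-- One step of deleting a leaf labeled `ℓ` (by pruning, with suppression). -/
def PruneLabelStep (ψ : V → L) (ℓ : L) (G G' : SimpleGraph V) : Prop :=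
  ∃ v₀, IsLeaf G v₀ ∧ ψ v₀ = ℓ ∧ PruneSpec G v₀ G'

/-!
Maximal reduction means that every internal edge `e` of `T` resolves some quartet that no other
edge resolves, since otherwise contracting `e` would not change `I(T)`. Hence no other edge has
`M`-sets containing those of `e` on corresponding sides.

Let `A, B` and `C, D` be the `M`-sets of `(u,v)` and `(v,x)`, so `A ⊆ C` and `D ⊆ B`. The edges
`pq` and `rs'` of `T'` carry the same sets, and comparing them rules out every relative position
of `pq` and `rs'` except `p, q, …, r, s'` along one path. If `q ≠ r`, the first edge `(q,t)` of
the path from `q` to `r` is internal and its `M`-sets are sandwiched between those of `pq` and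
`rs'`. So are those of its preimage `(y,z)` under `φ`, and wherever `(y,z)` lies relative to `v`,
either its `M`-sets are dominated by those of `(u,v)` or `(v,x)`, or `A` or `D` would meet both
sides of an edge.
-/

theorem SimpleGraph.IsAcyclic.false_of_triangle {G : SimpleGraph V} {a b c : V}
    (hG : G.IsAcyclic) (hab : G.Adj a b) (hbc : G.Adj b c) (hac : G.Adj a c) : False := by
  obtain ⟨C⟩ := hG.colorable_two
  have h1 := C.valid hab
  have h2 := C.valid hbc
  have h3 := C.valid hac
  omega

section Sides

variable {G : SimpleGraph V} {ψ : V → L} {a b c d u v w : V}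

theorem mem_side_self (u v : V) : u ∈ side G u v := Reachable.refl u

theorem deleteEdges_adj_of_ne (hab : G.Adj a b) (hne : s(a, b) ≠ s(u, v)) :
    (G.deleteEdges {s(u, v)}).Adj a b :=
  deleteEdges_adj.2 ⟨hab, hne⟩

theorem mem_side_of_adj (hab : G.Adj a b) (hne : s(a, b) ≠ s(u, v)) (ha : a ∈ side G u v) :
    b ∈ side G u v :=
  (deleteEdges_adj_of_ne hab.symm (by rwa [Sym2.eq_swap])).reachable.trans ha

theorem notMem_side_of_mem_side (hG : G.IsAcyclic) (huv : G.Adj u v) (hw : w ∈ side G u v) :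
    w ∉ side G v u := by
  intro hw'
  refine isAcyclic_iff_forall_adj_isBridge.mp hG huv ?_
  rw [side, Sym2.eq_swap] at hw'
  exact (hw : (G.deleteEdges {s(u, v)}).Reachable w u).symm.trans hw'

theorem mem_side_or_mem_side (huv : G.Adj u v) (hw : G.Reachable w u) :
    w ∈ side G u v ∨ w ∈ side G v u := by
  obtain ⟨p⟩ := hw
  induction p with
  | nil => exact Or.inl (mem_side_self _ _)
  | @cons w w' u hadj p ih =>
    by_cases he : s(w, w') = s(u, v)
    · rcases Sym2.eq_iff.mp he with ⟨rfl, -⟩ | ⟨rfl, -⟩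
      exacts [Or.inl (mem_side_self _ _), Or.inr (mem_side_self _ _)]
    · rcases ih huv with h | h
      · exact Or.inl (mem_side_of_adj hadj.symm (by rwa [Sym2.eq_swap]) h)
      · exact Or.inr (mem_side_of_adj hadj.symm (by rwa [Sym2.eq_swap, @Sym2.eq_swap _ v]) h)

theorem side_subset_side (hc : c ∈ side G a b) (hb : b ∉ side G c d) :
    side G c d ⊆ side G a b := by
  classical
  intro w hw
  obtain ⟨p⟩ := (hw : (G.deleteEdges {s(c, d)}).Reachable w c)
  have hbp : b ∉ p.support := fun hbp => hb (p.dropUntil b hbp).reachable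
  have hedges : ∀ e ∈ p.edges, e ∈ (G.deleteEdges {s(a, b)}).edgeSet := by
    intro e he
    rw [edgeSet_deleteEdges] at *
    refine ⟨(edgeSet_deleteEdges _ ▸ p.edges_subset_edgeSet he).1, ?_⟩
    rintro rfl
    exact hbp (p.snd_mem_support_of_mem_edges he)
  exact (p.transfer _ hedges).reachable.trans hc

theorem sideLabels_mono (h : side G a b ⊆ side G c d) :
    sideLabels G ψ a b ⊆ sideLabels G ψ c d := by
  rintro m ⟨w, hw, hws, rfl⟩
  exact ⟨w, hw, h hws, rfl⟩

theorem Mside_mono (h : side G a b ⊆ side G c d) (h' : side G d c ⊆ side G b a) :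
    Mside G ψ a b ⊆ Mside G ψ c d :=
  fun _ hm => ⟨sideLabels_mono h hm.1, fun hc => hm.2 (sideLabels_mono h' hc)⟩

theorem Mside_disjoint (u v : V) : Disjoint (Mside G ψ u v) (Mside G ψ v u) :=
  Set.disjoint_left.2 fun _ hm hm' => hm.2 hm'.1

theorem false_of_nonempty_subset_Mside {X : Set L} (hX : X.Nonempty) (h₁ : X ⊆ Mside G ψ u v)
    (h₂ : X ⊆ Mside G ψ v u) : False :=
  Set.disjoint_left.1 (Mside_disjoint u v) (h₁ hX.some_mem) (h₂ hX.some_mem)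

end Sides

section Precedes

variable {G : SimpleGraph V} {ψ : V → L} {a b c d : V}

/-- The directed edges `a → b` and `c → d` lie in this order on a path `a, b, …, c, d`. -/
def Precedes (G : SimpleGraph V) (a b c d : V) : Prop :=
  a ∈ side G c d ∧ d ∈ side G b a

theorem precedes_of_adj (hab : G.Adj a b) (hbc : G.Adj b c) (hac : a ≠ c) :
    Precedes G a b b c :=
  ⟨(deleteEdges_adj_of_ne hab (by simp [hab.ne, hac])).reachable,
    (deleteEdges_adj_of_ne hbc.symm (by simp [hbc.ne.symm, hac.symm])).reachable⟩

theorem Precedes.side_subset (hG : G.IsAcyclic) (hab : G.Adj a b) (hcd : G.Adj c d)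
    (h : Precedes G a b c d) : side G a b ⊆ side G c d ∧ side G d c ⊆ side G b a :=
  ⟨side_subset_side h.1 (notMem_side_of_mem_side hG hab.symm h.2),
    side_subset_side h.2 (notMem_side_of_mem_side hG hcd h.1)⟩

theorem Precedes.Mside_subset (hG : G.IsAcyclic) (hab : G.Adj a b) (hcd : G.Adj c d)
    (h : Precedes G a b c d) : Mside G ψ a b ⊆ Mside G ψ c d ∧ Mside G ψ d c ⊆ Mside G ψ b a :=
  let ⟨h₁, h₂⟩ := h.side_subset hG hab hcd
  ⟨Mside_mono h₁ h₂, Mside_mono h₂ h₁⟩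

theorem adj_mem_same_side (hab : G.Adj a b) (hcd : G.Adj c d) (hne : s(a, b) ≠ s(c, d))
    (hac : G.Reachable a c) :
    (a ∈ side G c d ∧ b ∈ side G c d) ∨ (a ∈ side G d c ∧ b ∈ side G d c) := by
  rcases mem_side_or_mem_side hcd hac with h | h
  · exact Or.inl ⟨h, mem_side_of_adj hab hne h⟩
  · exact Or.inr ⟨h, mem_side_of_adj hab (by rwa [@Sym2.eq_swap _ d]) h⟩

theorem precedes_cases (hab : G.Adj a b) (hcd : G.Adj c d) (hne : s(a, b) ≠ s(c, d))
    (hac : G.Reachable a c) :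
    Precedes G a b c d ∨ Precedes G a b d c ∨ Precedes G b a c d ∨ Precedes G b a d c := by
  rcases adj_mem_same_side hab hcd hne hac with ⟨ha, hb⟩ | ⟨ha, hb⟩ <;>
  rcases adj_mem_same_side hcd hab hne.symm hac.symm with ⟨hc, hd⟩ | ⟨hc, hd⟩
  exacts [Or.inr (Or.inr (Or.inl ⟨hb, hd⟩)), Or.inl ⟨ha, hd⟩,
    Or.inr (Or.inr (Or.inr ⟨hb, hc⟩)), Or.inr (Or.inl ⟨ha, hc⟩)]

end Precedes

section Resolves

variable {G : SimpleGraph V} {ψ : V → L} {a b : V} {κ : Quartet L}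

theorem Resolves.of_Mside_subset {G' : SimpleGraph V'} {ψ' : V' → L} {a' b' : V'}
    (h : Resolves G ψ a b κ) (hadj : G'.Adj a' b') (ha : Mside G ψ a b ⊆ Mside G' ψ' a' b')
    (hb : Mside G ψ b a ⊆ Mside G' ψ' b' a') : Resolves G' ψ' a' b' κ := by
  obtain ⟨-, m₁, m₂, n₁, n₂, hm, hn, h₁, h₂, h₃, h₄, rfl⟩ := h
  exact ⟨hadj, m₁, m₂, n₁, n₂, hm, hn, ha h₁, ha h₂, hb h₃, hb h₄, rfl⟩

theorem Resolves.symm (h : Resolves G ψ a b κ) : Resolves G ψ b a κ := by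
  obtain ⟨hadj, m₁, m₂, n₁, n₂, hm, hn, h₁, h₂, h₃, h₄, rfl⟩ := h
  exact ⟨hadj.symm, n₁, n₂, m₁, m₂, hn, hm, h₃, h₄, h₁, h₂, Sym2.eq_swap⟩

theorem Resolves.of_sym2_eq {c d : V} (h : Resolves G ψ a b κ) (he : s(a, b) = s(c, d)) :
    Resolves G ψ c d κ := by
  rcases Sym2.eq_iff.1 he with ⟨rfl, rfl⟩ | ⟨rfl, rfl⟩
  exacts [h, h.symm]

end Resolves

theorem SimpleGraph.Reachable.of_forall_adj {W : Type} {G : SimpleGraph V} {H : SimpleGraph W}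
    (f : V → W) (hf : ∀ a b, G.Adj a b → H.Reachable (f a) (f b)) {u v : V}
    (h : G.Reachable u v) : H.Reachable (f u) (f v) := by
  rw [reachable_iff_reflTransGen] at h ⊢
  exact h.lift' f fun a b hab => (reachable_iff_reflTransGen _ _).1 (hf a b hab)

section Contraction

variable [DecidableEq V] {G : SimpleGraph V} {ψ : V → L} {g h a b α β w : V}

/-- The vertex map of `contractEdge G g h`. -/
def mergeInto (g h : V) (w : V) : V := if w = h then g else w

@[simp] theorem mergeInto_self : mergeInto g h h = g := if_pos rfl

theorem mergeInto_of_ne (hw : w ≠ h) : mergeInto g h w = w := if_neg hw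

theorem mergeInto_sym2_eq (he : s(a, b) = s(α, β)) :
    s(mergeInto g h a, mergeInto g h b) = s(mergeInto g h α, mergeInto g h β) := by
  simpa using congrArg (Sym2.map (mergeInto g h)) he

theorem contractEdge_adj_mergeInto (hgh : G.Adj g h) (hab : G.Adj a b)
    (hne : s(a, b) ≠ s(g, h)) : (contractEdge G g h).Adj (mergeInto g h a) (mergeInto g h b) := by
  by_cases ha : a = h
  · subst ha
    have hbg : b ≠ g := by rintro rfl; exact hne Sym2.eq_swap
    rw [mergeInto_self, mergeInto_of_ne hab.ne.symm]
    exact ⟨hbg.symm, hgh.ne, hab.ne.symm, Or.inr (Or.inl ⟨rfl, hab⟩)⟩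
  by_cases hb : b = h
  · subst hb
    have hag : a ≠ g := by rintro rfl; exact hne rfl
    rw [mergeInto_self, mergeInto_of_ne ha]
    exact ⟨hag, ha, hgh.ne, Or.inr (Or.inr ⟨rfl, hab⟩)⟩
  rw [mergeInto_of_ne ha, mergeInto_of_ne hb]
  exact ⟨hab.ne, ha, hb, Or.inl hab⟩

theorem exists_of_contractEdge_adj (hab : (contractEdge G g h).Adj a b) :
    ∃ α β, G.Adj α β ∧ s(α, β) ≠ s(g, h) ∧ mergeInto g h α = a ∧ mergeInto g h β = b := by
  obtain ⟨hne, hah, hbh, hG | ⟨rfl, hhb⟩ | ⟨rfl, hah'⟩⟩ := hab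
  · exact ⟨a, b, hG, by simp [hah, hbh], mergeInto_of_ne hah, mergeInto_of_ne hbh⟩
  · exact ⟨h, b, hhb, by simp [hbh, Ne.symm hne], mergeInto_self, mergeInto_of_ne hbh⟩
  · exact ⟨a, h, hah', by simp [hah, hne], mergeInto_of_ne hah, mergeInto_self⟩

theorem mem_side_of_mem_side_contractEdge (hgh : G.Adj g h) (hne : s(α, β) ≠ s(g, h))
    (hw : w ∈ side (contractEdge G g h) (mergeInto g h α) (mergeInto g h β)) :
    w ∈ side G α β := by
  set D := G.deleteEdges {s(α, β)}
  have hD : ∀ x y, G.Adj x y →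
      s(mergeInto g h x, mergeInto g h y) ≠ s(mergeInto g h α, mergeInto g h β) → D.Adj x y :=
    fun x y hxy hne' => deleteEdges_adj_of_ne hxy fun he => hne' (mergeInto_sym2_eq he)
  have hDgh : D.Adj g h := deleteEdges_adj_of_ne hgh hne.symm
  have hlift : D.Reachable w (mergeInto g h α) := by
    refine Reachable.of_forall_adj id (fun a b hab => ?_) hw
    obtain ⟨⟨-, hah, hbh, hG | ⟨rfl, hhb⟩ | ⟨rfl, hah'⟩⟩, hab⟩ := deleteEdges_adj.1 hab
    · exact (hD a b hG (by rwa [mergeInto_of_ne hah, mergeInto_of_ne hbh])).reachable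
    · exact hDgh.reachable.trans
        (hD h b hhb (by rwa [mergeInto_self, mergeInto_of_ne hbh])).reachable
    · exact (hD a h hah' (by rwa [mergeInto_of_ne hah, mergeInto_self])).reachable.trans
        hDgh.symm.reachable
  by_cases hα : α = h
  · subst hα
    exact hlift.trans (by simpa using hDgh.reachable)
  · rwa [mergeInto_of_ne hα] at hlift

theorem mem_side_contractEdge_iff (hG : G.IsAcyclic) (hgh : G.Adj g h) (hαβ : G.Adj α β)
    (hne : s(α, β) ≠ s(g, h)) (hw : w ≠ h) :
    w ∈ side (contractEdge G g h) (mergeInto g h α) (mergeInto g h β) ↔ w ∈ side G α β := by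
  refine ⟨mem_side_of_mem_side_contractEdge hgh hne, fun hwαβ => ?_⟩
  have hreach : (contractEdge G g h).Reachable w (mergeInto g h α) := by
    rw [← mergeInto_of_ne (g := g) hw]
    refine (Reachable.mono (deleteEdges_le _) hwαβ).of_forall_adj _ fun a b hab => ?_
    by_cases he : s(a, b) = s(g, h)
    · rcases Sym2.eq_iff.1 he with ⟨rfl, rfl⟩ | ⟨rfl, rfl⟩ <;>
        simp [mergeInto_of_ne hgh.ne]
    · exact (contractEdge_adj_mergeInto hgh hab he).reachable
  refine (mem_side_or_mem_side (contractEdge_adj_mergeInto hgh hαβ hne) hreach).resolve_right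
    fun hw' => notMem_side_of_mem_side hG hαβ hwαβ ?_
  exact mem_side_of_mem_side_contractEdge hgh (by rwa [Sym2.eq_swap]) hw'

theorem neighborSet_contractEdge_of_ne (hgh : G.Adj g h) (hwg : w ≠ g) (hwh : w ≠ h) :
    (contractEdge G g h).neighborSet w = mergeInto g h '' G.neighborSet w := by
  ext y
  constructor
  · rintro ⟨-, -, hyh, hG | ⟨rfl, -⟩ | ⟨rfl, hwh'⟩⟩
    · exact ⟨y, hG, mergeInto_of_ne hyh⟩
    · exact absurd rfl hwg
    · exact ⟨h, hwh', mergeInto_self⟩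
  · rintro ⟨z, hz, rfl⟩
    rw [mem_neighborSet, ← mergeInto_of_ne (g := g) hwh]
    exact contractEdge_adj_mergeInto hgh hz (by simp [hwg, hwh])

theorem injOn_mergeInto (hG : G.IsAcyclic) (hgh : G.Adj g h) :
    Set.InjOn (mergeInto g h) (G.neighborSet w) := by
  have key : ∀ z, G.Adj w z → G.Adj w h → z ≠ h → mergeInto g h h ≠ mergeInto g h z :=
    fun z hz hwh hzh he => by
      rw [mergeInto_self, mergeInto_of_ne hzh] at he
      exact hG.false_of_triangle (he ▸ hz) hgh hwh
  intro z₁ hz₁ z₂ hz₂ he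
  by_cases h₁ : z₁ = h <;> by_cases h₂ : z₂ = h
  · exact h₁.trans h₂.symm
  · exact absurd (h₁ ▸ he) (key z₂ hz₂ (h₁ ▸ hz₁) h₂)
  · exact absurd (h₂ ▸ he.symm) (key z₁ hz₁ (h₂ ▸ hz₂) h₁)
  · rwa [mergeInto_of_ne h₁, mergeInto_of_ne h₂] at he

theorem isLeaf_contractEdge_iff (hG : G.IsAcyclic) (hgh : G.Adj g h) (hh : ¬ IsLeaf G h)
    (hg : 3 ≤ deg G g) : IsLeaf (contractEdge G g h) w ↔ IsLeaf G w := by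
  by_cases hwh : w = h
  · subst hwh
    have hN : (contractEdge G g w).neighborSet w = ∅ :=
      Set.eq_empty_of_forall_notMem fun _ hy => hy.2.1 rfl
    exact iff_of_false (by simp [IsLeaf, deg, hN]) hh
  by_cases hwg : w = g
  · subst hwg
    refine iff_of_false (fun hl => ?_) (by unfold IsLeaf; omega)
    obtain ⟨a, ha⟩ := Set.ncard_eq_one.1 hl
    have hsub : G.neighborSet w ⊆ {h, a} := fun y hy => by
      by_cases hyh : y = h
      · exact Or.inl hyh
      · have : y ∈ (contractEdge G w h).neighborSet w := ⟨hy.ne, hgh.ne, hyh, Or.inl hy⟩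
        exact Or.inr (ha ▸ this)
    have := (Set.ncard_le_ncard hsub).trans (Set.ncard_insert_le h {a})
    simp only [Set.ncard_singleton] at this
    unfold deg at hg
    omega
  rw [IsLeaf, IsLeaf, deg, deg, neighborSet_contractEdge_of_ne hgh hwg hwh,
    (injOn_mergeInto hG hgh).ncard_image]

theorem Mside_contractEdge (hG : G.IsAcyclic) (hgh : G.Adj g h) (hh : ¬ IsLeaf G h)
    (hg : 3 ≤ deg G g) (hαβ : G.Adj α β) (hne : s(α, β) ≠ s(g, h)) :
    Mside (contractEdge G g h) ψ (mergeInto g h α) (mergeInto g h β) = Mside G ψ α β := by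
  have hlabels : ∀ {α β}, G.Adj α β → s(α, β) ≠ s(g, h) →
      sideLabels (contractEdge G g h) ψ (mergeInto g h α) (mergeInto g h β) =
        sideLabels G ψ α β := fun hαβ hne => Set.ext fun m =>
    exists_congr fun w => by
      rw [isLeaf_contractEdge_iff hG hgh hh hg]
      exact and_congr_right fun hw =>
        by rw [mem_side_contractEdge_iff hG hgh hαβ hne (by rintro rfl; exact hh hw)]
  rw [Mside, Mside, hlabels hαβ hne, hlabels hαβ.symm (by rwa [Sym2.eq_swap])]

theorem infoContent_contractEdge (hG : G.IsAcyclic) (hgh : G.Adj g h)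
    (hh : ¬ IsLeaf G h) (hg : 3 ≤ deg G g) :
    infoContent (contractEdge G g h) ψ =
      {κ | ∃ α β, s(α, β) ≠ s(g, h) ∧ Resolves G ψ α β κ} := by
  ext κ
  constructor
  · rintro ⟨a, b, hres⟩
    obtain ⟨α, β, hαβ, hne, rfl, rfl⟩ := exists_of_contractEdge_adj hres.1
    refine ⟨α, β, hne, hres.of_Mside_subset hαβ ?_ ?_⟩
    · rw [Mside_contractEdge hG hgh hh hg hαβ hne]
    · rw [Mside_contractEdge hG hgh hh hg hαβ.symm (by rwa [Sym2.eq_swap])]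
  · rintro ⟨α, β, hne, hres⟩
    refine ⟨_, _, hres.of_Mside_subset (contractEdge_adj_mergeInto hgh hres.1 hne) ?_ ?_⟩
    · rw [Mside_contractEdge hG hgh hh hg hres.1 hne]
    · rw [Mside_contractEdge hG hgh hh hg hres.1.symm (by rwa [Sym2.eq_swap])]

end Contraction

theorem MulTree.reachable_of_adj (T : MulTree V L) {a b c d : V} (hab : T.G.Adj a b)
    (hcd : T.G.Adj c d) : T.G.Reachable a c :=
  T.conn a ⟨b, hab⟩ c ⟨d, hcd⟩

theorem InternalEdge.symm {G : SimpleGraph V} {a b : V} (h : InternalEdge G a b) :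
    InternalEdge G b a :=
  ⟨h.1.symm, h.2.2, h.2.1⟩

namespace MaximallyReduced

variable {T : MulTree V L} {g h u v x y z : V}

theorem exists_exclusive_quartet (hT : MaximallyReduced T.G T.ψ)
    (hgh : InternalEdge T.G g h) :
    ∃ κ, Resolves T.G T.ψ g h κ ∧ ∀ y z, s(y, z) ≠ s(g, h) → ¬ Resolves T.G T.ψ y z κ := by
  classical
  by_contra! hno
  refine hT.2 g h ⟨hgh, ?_⟩
  rw [infoContent_contractEdge T.acyclic hgh.1 hgh.2.2 (T.internal3 g ⟨h, hgh.1⟩ hgh.2.1)]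
  ext κ
  refine ⟨fun ⟨y, z, _, hres⟩ => ⟨y, z, hres⟩, fun ⟨y, z, hres⟩ => ?_⟩
  by_cases he : s(y, z) = s(g, h)
  · exact hno κ (hres.of_sym2_eq he)
  · exact ⟨y, z, he, hres⟩

theorem Mside_nonempty (hT : MaximallyReduced T.G T.ψ) (hgh : InternalEdge T.G g h) :
    (Mside T.G T.ψ g h).Nonempty :=
  let ⟨_, ⟨_, a, _, _, _, _, _, ha, _⟩, _⟩ := hT.exists_exclusive_quartet hgh
  ⟨a, ha⟩

theorem false_of_Mside_subset (hT : MaximallyReduced T.G T.ψ) (hgh : InternalEdge T.G g h)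
    (hyz : T.G.Adj y z) (hne : s(y, z) ≠ s(g, h)) (h₁ : Mside T.G T.ψ g h ⊆ Mside T.G T.ψ y z)
    (h₂ : Mside T.G T.ψ h g ⊆ Mside T.G T.ψ z y) : False :=
  let ⟨_, hκ, hexcl⟩ := hT.exists_exclusive_quartet hgh
  hexcl y z hne (hκ.of_Mside_subset hyz h₁ h₂)

theorem false_of_Mside_subset_of_mem_side (hT : MaximallyReduced T.G T.ψ)
    (huv : InternalEdge T.G u v) (hyz : InternalEdge T.G y z) (hne : s(y, z) ≠ s(u, v))
    (hv : v ∈ side T.G z y) (h₁ : Mside T.G T.ψ u v ⊆ Mside T.G T.ψ y z)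
    (h₂ : Mside T.G T.ψ z y ⊆ Mside T.G T.ψ v u) : False := by
  have hu : u ∈ side T.G z y :=
    mem_side_of_adj huv.1.symm (by rwa [Sym2.eq_swap, @Sym2.eq_swap _ z, ne_comm]) hv
  rcases mem_side_or_mem_side huv.1 (T.reachable_of_adj hyz.1 huv.1) with hy | hy
  · have hprec : Precedes T.G y z u v := ⟨hy, hv⟩
    exact hT.false_of_Mside_subset hyz huv.1 hne.symm
      (hprec.Mside_subset T.acyclic hyz.1 huv.1).1 h₂
  · have hprec : Precedes T.G y z v u := ⟨hy, hu⟩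
    exact false_of_nonempty_subset_Mside (hT.Mside_nonempty huv) subset_rfl
      (h₁.trans (hprec.Mside_subset T.acyclic hyz.1 huv.1.symm).1)

theorem false_of_Mside_between (hT : MaximallyReduced T.G T.ψ) (huv : InternalEdge T.G u v)
    (hvx : InternalEdge T.G v x) (hyz : InternalEdge T.G y z) (hne₁ : s(y, z) ≠ s(u, v))
    (hne₂ : s(y, z) ≠ s(v, x)) (h₁ : Mside T.G T.ψ u v ⊆ Mside T.G T.ψ y z)
    (h₂ : Mside T.G T.ψ y z ⊆ Mside T.G T.ψ v x) (h₃ : Mside T.G T.ψ x v ⊆ Mside T.G T.ψ z y)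
    (h₄ : Mside T.G T.ψ z y ⊆ Mside T.G T.ψ v u) : False := by
  rcases mem_side_or_mem_side hyz.1 (T.reachable_of_adj huv.1.symm hyz.1) with hv | hv
  · exact hT.false_of_Mside_subset_of_mem_side hvx.symm hyz.symm
      (by rwa [Sym2.eq_swap, @Sym2.eq_swap _ x]) hv h₃ h₂
  · exact hT.false_of_Mside_subset_of_mem_side huv hyz hne₁ hv h₁ h₄

end MaximallyReduced

section PathOrder

variable {G : SimpleGraph V} {ψ : V → L} {p q r s t : V}

theorem precedes_of_Mside_subset (hG : G.IsAcyclic) (hpq : G.Adj p q) (hrs : G.Adj r s)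
    (hne : s(p, q) ≠ s(r, s)) (hpr : G.Reachable p r) (hA : (Mside G ψ p q).Nonempty)
    (hD : (Mside G ψ s r).Nonempty) (hDB : Mside G ψ s r ⊆ Mside G ψ q p)
    (hBD : ¬ Mside G ψ q p ⊆ Mside G ψ s r) :
    Precedes G p q r s := by
  rcases precedes_cases hpq hrs hne hpr with h | h | h | h
  · exact h
  · exact (false_of_nonempty_subset_Mside hA subset_rfl
      ((h.Mside_subset hG hpq hrs.symm).1.trans hDB)).elim
  · exact (false_of_nonempty_subset_Mside hD (h.Mside_subset hG hpq.symm hrs).2 hDB).elim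
  · exact absurd (h.Mside_subset hG hpq.symm hrs.symm).1 hBD

theorem not_isLeaf_of_adj_of_adj (h₁ : G.Adj t p) (h₂ : G.Adj t q) (hpq : p ≠ q) :
    ¬ IsLeaf G t := fun hl => by
  obtain ⟨a, ha⟩ := Set.ncard_eq_one.1 hl
  have hp : p ∈ G.neighborSet t := h₁
  have hq : q ∈ G.neighborSet t := h₂
  rw [ha] at hp hq
  exact hpq (hp.trans hq.symm)

/-- `t` is the neighbour of `q` on the path from `q` to `r`. -/
theorem exists_adj_precedes_precedes (hG : G.IsAcyclic) (hpq : G.Adj p q) (hrs : G.Adj r s)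
    (hne : s(p, q) ≠ s(r, s)) (hqr : q ≠ r) (hr : ¬ IsLeaf G r) (h : Precedes G p q r s) :
    ∃ t, G.Adj q t ∧ ¬ IsLeaf G t ∧ s(q, t) ≠ s(p, q) ∧ s(q, t) ≠ s(r, s) ∧
      Precedes G p q q t ∧ Precedes G q t r s := by
  classical
  have hq : q ∈ side G r s := mem_side_of_adj hpq hne h.1
  have hrq : r ∈ side G q p :=
    mem_side_of_adj hrs.symm (by rwa [Sym2.eq_swap, @Sym2.eq_swap _ q, ne_comm]) h.2
  have hsq : s ≠ q := by
    rintro rfl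
    exact notMem_side_of_mem_side hG hrs.symm (mem_side_self _ _) hq
  obtain ⟨W⟩ := hrq.symm
  obtain ⟨P, hP⟩ := W.toPath
  cases P with
  | nil => exact absurd rfl hqr
  | @cons _ t _ hqt P =>
    obtain ⟨hqt, hqt_ne⟩ := deleteEdges_adj.1 hqt
    have htp : t ≠ p := by rintro rfl; exact hqt_ne rfl
    rw [Walk.cons_isPath_iff] at hP
    have hrt : r ∈ side G t q := by
      refine (P.reverse.transfer _ fun e he => ?_).reachable
      rw [Walk.edges_reverse, List.mem_reverse] at he
      rw [edgeSet_deleteEdges]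
      refine ⟨(edgeSet_deleteEdges _ ▸ P.edges_subset_edgeSet he).1, fun he' => hP.2 ?_⟩
      rw [Set.mem_singleton_iff.1 he'] at he
      exact P.snd_mem_support_of_mem_edges he
    refine ⟨t, hqt, ?_, by simp [htp, hqt.ne'], by simp [hqr, hsq.symm],
      precedes_of_adj hpq hqt htp.symm, hq, mem_side_of_adj hrs (by simp [hqr.symm, hsq]) hrt⟩
    cases P with
    | nil => exact hr
    | cons htt' P' =>
      exact not_isLeaf_of_adj_of_adj hqt.symm (deleteEdges_adj.1 htt').1 fun he => hP.2 (by
        subst he; simp)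

end PathOrder

section EdgeBijection

variable {G : SimpleGraph V} {ψ : V → L} {G' : SimpleGraph V'} {ψ' : V' → L}
  {φ : internalEdgeSet G ≃ internalEdgeSet G'}

def PreservesMside (G : SimpleGraph V) (ψ : V → L) (G' : SimpleGraph V') (ψ' : V' → L)
    (φ : internalEdgeSet G ≃ internalEdgeSet G') : Prop :=
  ∀ (a b : V) (h : InternalEdge G a b), ∃ a' b' : V', InternalEdge G' a' b' ∧
    (φ ⟨s(a, b), ⟨a, b, rfl, h⟩⟩).1 = s(a', b') ∧
    Mside G ψ a b = Mside G' ψ' a' b' ∧ Mside G ψ b a = Mside G' ψ' b' a'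

theorem internalEdgeSet_apply_eq_iff {a b c d : V} (hab : InternalEdge G a b)
    (hcd : InternalEdge G c d) :
    (φ ⟨s(a, b), a, b, rfl, hab⟩).1 = (φ ⟨s(c, d), c, d, rfl, hcd⟩).1 ↔ s(a, b) = s(c, d) := by
  rw [Subtype.val_inj, φ.apply_eq_iff_eq, Subtype.ext_iff]

theorem PreservesMside.image (hφ : PreservesMside G ψ G' ψ' φ) {u v : V} {p q : V'}
    (huv : InternalEdge G u v) (hpq : (φ ⟨s(u, v), u, v, rfl, huv⟩).1 = s(p, q))
    (hM : Mside G ψ u v = Mside G' ψ' p q) (hA : (Mside G ψ u v).Nonempty) :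
    InternalEdge G' p q ∧ Mside G ψ v u = Mside G' ψ' q p := by
  obtain ⟨a, b, hab, he, -, hMb⟩ := hφ u v huv
  rcases Sym2.eq_iff.1 (hpq.symm.trans he) with ⟨rfl, rfl⟩ | ⟨rfl, rfl⟩
  · exact ⟨hab, hMb⟩
  · exact (false_of_nonempty_subset_Mside hA subset_rfl (hM.trans hMb.symm).subset).elim

theorem PreservesMside.exists_preimage (hφ : PreservesMside G ψ G' ψ' φ) {q t : V'}
    (hqt : InternalEdge G' q t) :
    ∃ y z, ∃ hyz : InternalEdge G y z, (φ ⟨s(y, z), y, z, rfl, hyz⟩).1 = s(q, t) ∧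
      Mside G ψ y z = Mside G' ψ' q t ∧ Mside G ψ z y = Mside G' ψ' t q := by
  obtain ⟨y, z, he, hyz⟩ := (φ.symm ⟨s(q, t), q, t, rfl, hqt⟩).2
  have hφyz : (φ ⟨s(y, z), y, z, rfl, hyz⟩).1 = s(q, t) := by
    rw [show (⟨s(y, z), y, z, rfl, hyz⟩ : internalEdgeSet G) = φ.symm _ from Subtype.ext he.symm,
      φ.apply_symm_apply]
  obtain ⟨a, b, -, hab, hMa, hMb⟩ := hφ y z hyz
  rcases Sym2.eq_iff.1 (hab.symm.trans hφyz) with ⟨rfl, rfl⟩ | ⟨rfl, rfl⟩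
  · exact ⟨y, z, hyz, hφyz, hMa, hMb⟩
  · refine ⟨z, y, hyz.symm, ?_, hMb, hMa⟩
    rw [(internalEdgeSet_apply_eq_iff hyz.symm hyz).2 Sym2.eq_swap, hφyz, Sym2.eq_swap]

end EdgeBijection

theorem stmt13_general (T : MulTree V L) (T' : MulTree V' L)
    (hT : MaximallyReduced T.G T.ψ)
    (φ : internalEdgeSet T.G ≃ internalEdgeSet T'.G)
    (hφ : ∀ (a b : V) (h : InternalEdge T.G a b),
      ∃ a' b' : V', InternalEdge T'.G a' b' ∧
        (φ ⟨s(a, b), ⟨a, b, rfl, h⟩⟩).1 = s(a', b') ∧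
        Mside T.G T.ψ a b = Mside T'.G T'.ψ a' b' ∧
        Mside T.G T.ψ b a = Mside T'.G T'.ψ b' a')
    (u v x : V) (hux : u ≠ x)
    (h1 : InternalEdge T.G u v) (h2 : InternalEdge T.G v x)
    (p q r s' : V')
    (hpq : (φ ⟨s(u, v), ⟨u, v, rfl, h1⟩⟩).1 = s(p, q))
    (hrs : (φ ⟨s(v, x), ⟨v, x, rfl, h2⟩⟩).1 = s(r, s'))
    (hM1 : Mside T.G T.ψ u v = Mside T'.G T'.ψ p q)
    (hM2 : Mside T.G T.ψ v x = Mside T'.G T'.ψ r s') :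
    q = r ∧ T'.G.Adj p q ∧ T'.G.Adj r s' := by
  have hA := hT.Mside_nonempty h1
  have hD := hT.Mside_nonempty h2.symm
  obtain ⟨hpq', hM1'⟩ := PreservesMside.image hφ h1 hpq hM1 hA
  obtain ⟨hrs', hM2'⟩ := PreservesMside.image hφ h2 hrs hM2 (hT.Mside_nonempty h2)
  refine ⟨by_contra fun hqr => ?_, hpq'.1, hrs'.1⟩
  have huvx : s(u, v) ≠ s(v, x) := by simp [h1.1.ne, hux]
  have hne : s(p, q) ≠ s(r, s') := by rwa [← hpq, ← hrs, Ne, internalEdgeSet_apply_eq_iff h1 h2]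
  obtain ⟨hAC, hDB⟩ := (precedes_of_adj h1.1 h2.1 hux).Mside_subset (ψ := T.ψ) T.acyclic h1.1 h2.1
  have hprec : Precedes T'.G p q r s' :=
    precedes_of_Mside_subset T'.acyclic hpq'.1 hrs'.1 hne (T'.reachable_of_adj hpq'.1 hrs'.1)
      (hM1 ▸ hA) (hM2' ▸ hD) (hM1' ▸ hM2' ▸ hDB) fun hBD =>
        hT.false_of_Mside_subset h1 h2.1 huvx.symm hAC (hM1'.symm ▸ hM2'.symm ▸ hBD)
  obtain ⟨t, hqt, ht, hqt_pq, hqt_rs, hpt, htr⟩ :=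
    exists_adj_precedes_precedes T'.acyclic hpq'.1 hrs'.1 hne hqr hrs'.2.1 hprec
  obtain ⟨y, z, hyz, hφyz, hMy, hMz⟩ := PreservesMside.exists_preimage hφ ⟨hqt, hpq'.2.2, ht⟩
  obtain ⟨hAA', hB'B⟩ := hpt.Mside_subset (ψ := T'.ψ) T'.acyclic hpq'.1 hqt
  obtain ⟨hA'C, hDB'⟩ := htr.Mside_subset (ψ := T'.ψ) T'.acyclic hqt hrs'.1
  refine hT.false_of_Mside_between h1 h2 hyz ?_ ?_ (hM1 ▸ hMy ▸ hAA') (hMy ▸ hM2 ▸ hA'C)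
    (hM2' ▸ hMz ▸ hDB') (hMz ▸ hM1' ▸ hB'B)
  · rwa [Ne, ← internalEdgeSet_apply_eq_iff hyz h1 (φ := φ), hφyz, hpq]
  · rwa [Ne, ← internalEdgeSet_apply_eq_iff hyz h2 (φ := φ), hφyz, hrs]

/-- Let `T, T'` be maximally reduced with `I(T) = I(T')` and let `φ`
be a bijection between their internal edges such that corresponding edges have
equal `M`-sets on corresponding sides. If `(u,v)` and `(v,x)` are adjacent
internal edges of `T`, and `(p,q) = φ(u,v)`, `(r,s') = φ(v,x)` are oriented so
that `M_u^{uv} = M_p^{pq}` and `M_v^{vx} = M_r^{rs'}`, then `q = r`: the image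
edges are adjacent in `T'`, sharing the endpoint corresponding to `v`. -/
theorem stmt13 (T : MulTree V L) (T' : MulTree V' L)
    (hT : MaximallyReduced T.G T.ψ) (hT' : MaximallyReduced T'.G T'.ψ)
    (hinfo : infoContent T.G T.ψ = infoContent T'.G T'.ψ)
    (φ : internalEdgeSet T.G ≃ internalEdgeSet T'.G)
    (hφ : ∀ (a b : V) (h : InternalEdge T.G a b),
      ∃ a' b' : V', InternalEdge T'.G a' b' ∧
        (φ ⟨s(a, b), ⟨a, b, rfl, h⟩⟩).1 = s(a', b') ∧
        Mside T.G T.ψ a b = Mside T'.G T'.ψ a' b' ∧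
        Mside T.G T.ψ b a = Mside T'.G T'.ψ b' a')
    (u v x : V) (hux : u ≠ x)
    (h1 : InternalEdge T.G u v) (h2 : InternalEdge T.G v x)
    (p q r s' : V')
    (hpq : (φ ⟨s(u, v), ⟨u, v, rfl, h1⟩⟩).1 = s(p, q))
    (hrs : (φ ⟨s(v, x), ⟨v, x, rfl, h2⟩⟩).1 = s(r, s'))
    (hM1 : Mside T.G T.ψ u v = Mside T'.G T'.ψ p q)
    (hM2 : Mside T.G T.ψ v x = Mside T'.G T'.ψ r s') :
    q = r ∧ T'.G.Adj p q ∧ T'.G.Adj r s' :=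
  stmt13_general T T' hT φ hφ u v x hux h1 h2 p q r s' hpq hrs hM1 hM2
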